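/- arXiv:math/0608769 — 4 statements merged into one kernel-verified Lean document; each statement's English description precedes it below -/
import Mathlib

section
/- In any universal cycle on 3-subsets of [n], if the unordered pair {a,b} never appears as consecutive characters and the unordered pair {a,c} never appears as consecutive characters, with a, b, c distinct elements of [n], then a contradiction follows; equivalently, no two unordered pairs of letters missing as consecutive characters in the cycle share a common letter. -/
/-- The cyclic `t`-window of the string `w` starting at position `i`, as a multiset. -/
def cycWindow (w : List ℕ) (t i : ℕ) : Multiset ℕ :=
  ((List.range t).map (fun j => w.getD ((i + j) % w.length) 0) : List ℕ)

/-- The list of all cyclic `t`-windows of the string `w`. -/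
def cycWindows (w : List ℕ) (t : ℕ) : List (Multiset ℕ) :=
  (List.range w.length).map (cycWindow w t)

/-- The list of all (non-cyclic) `t`-windows of the linear string `w`. -/
def linWindows (w : List ℕ) (t : ℕ) : List (Multiset ℕ) :=
  (List.range (w.length + 1 - t)).map
    (fun i => ((List.range t).map (fun j => w.getD (i + j) 0) : List ℕ))

/-- `w` is a universal cycle on `t`-multisets over `[n] = {1,…,n}`. -/
def IsUcycle (n t : ℕ) (w : List ℕ) : Prop :=
  w ≠ [] ∧ (∀ x ∈ w, x ∈ Finset.Icc 1 n) ∧ (cycWindows w t).Nodup ∧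
  ∀ m : Multiset ℕ, m ∈ cycWindows w t ↔
    (Multiset.card m = t ∧ ∀ x ∈ m, x ∈ Finset.Icc 1 n)

/-- `w` is a universal cycle on `t`-subsets of `[n] = {1,…,n}`. -/
def IsUcycleSet (n t : ℕ) (w : List ℕ) : Prop :=
  w ≠ [] ∧ (∀ x ∈ w, x ∈ Finset.Icc 1 n) ∧ (cycWindows w t).Nodup ∧
  ∀ m : Multiset ℕ, m ∈ cycWindows w t ↔
    (m.Nodup ∧ Multiset.card m = t ∧ ∀ x ∈ m, x ∈ Finset.Icc 1 n)

/-- The unordered pair `{x,y}` appears as (cyclically) consecutive characters of `w`. -/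
def ConsecPair (w : List ℕ) (x y : ℕ) : Prop :=
  ∃ i < w.length, ({w.getD i 0, w.getD ((i + 1) % w.length) 0} : Multiset ℕ) = {x, y}

theorem missing_pairs_no_common_letter (n : ℕ) (w : List ℕ)
    (hw : IsUcycleSet n 3 w) (a b c : ℕ)
    (ha : a ∈ Finset.Icc 1 n) (hb : b ∈ Finset.Icc 1 n) (hc : c ∈ Finset.Icc 1 n)
    (hab : a ≠ b) (hac : a ≠ c) (hbc : b ≠ c)
    (h1 : ¬ ConsecPair w a b) (h2 : ¬ ConsecPair w a c) :
    False := by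
  obtain ⟨hne, hmem, hnd, hiff⟩ := hw
  have hL : 0 < w.length := List.length_pos_iff.mpr hne
  have habc : ({a, b, c} : Multiset ℕ) ∈ cycWindows w 3 := by
    rw [hiff]
    refine ⟨?_, by simp, ?_⟩
    · simp [hab, hac, hbc]
    · intro x hx
      simp only [Multiset.insert_eq_cons, Multiset.mem_cons, Multiset.mem_singleton] at hx
      rcases hx with h | h | h <;> subst h <;> assumption
  simp only [cycWindows, List.mem_map, List.mem_range] at habc
  obtain ⟨i, hi, hwin⟩ := habc
  set L := w.length with hLdef
  have hwin' : ({w.getD (i % L) 0, w.getD ((i+1) % L) 0, w.getD ((i+2) % L) 0} : Multiset ℕ)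
      = {a, b, c} := by
    rw [← hwin]
    simp [cycWindow, List.range_succ]
    rfl
  set x0 := w.getD (i % L) 0 with hx0
  set x1 := w.getD ((i+1) % L) 0 with hx1
  set x2 := w.getD ((i+2) % L) 0 with hx2
  have hnd3 : ({x0, x1, x2} : Multiset ℕ).Nodup := by
    rw [hwin']; simp [hab, hac, hbc]
  have hd01 : x0 ≠ x1 := by simp at hnd3; tauto
  have hd02 : x0 ≠ x2 := by simp at hnd3; tauto
  have hd12 : x1 ≠ x2 := by simp at hnd3; tauto
  have m0 : x0 = a ∨ x0 = b ∨ x0 = c := by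
    have : x0 ∈ ({a,b,c} : Multiset ℕ) := by rw [← hwin']; simp
    simpa using this
  have m1 : x1 = a ∨ x1 = b ∨ x1 = c := by
    have : x1 ∈ ({a,b,c} : Multiset ℕ) := by rw [← hwin']; simp
    simpa using this
  have ma : a = x0 ∨ a = x1 ∨ a = x2 := by
    have : a ∈ ({x0,x1,x2} : Multiset ℕ) := by rw [hwin']; simp
    simpa using this
  have hiL : i % L = i := Nat.mod_eq_of_lt hi
  have key01 : ({x0, x1} : Multiset ℕ) = {a, b} ∨ ({x0, x1} : Multiset ℕ) = {a, c} →
      False := by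
    rintro (h | h)
    · exact h1 ⟨i % L, by rw [hiL]; exact hi, by rw [hiL] at hx0 ⊢; rw [← hx0, ← hx1]; exact h⟩
    · exact h2 ⟨i % L, by rw [hiL]; exact hi, by rw [hiL] at hx0 ⊢; rw [← hx0, ← hx1]; exact h⟩
  have hnext : ((i + 1) % L + 1) % L = (i + 2) % L := Nat.mod_add_mod (i+1) L 1
  have key12 : ({x1, x2} : Multiset ℕ) = {a, b} ∨ ({x1, x2} : Multiset ℕ) = {a, c} →
      False := by
    rintro (h | h)
    · exact h1 ⟨(i+1) % L, Nat.mod_lt _ hL, by rw [hnext, ← hx1, ← hx2]; exact h⟩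
    · exact h2 ⟨(i+1) % L, Nat.mod_lt _ hL, by rw [hnext, ← hx1, ← hx2]; exact h⟩
  rcases ma with h | h | h
  · -- a = x0 : x1 = b or c
    have : x1 = b ∨ x1 = c := by rcases m1 with h' | h' | h' <;> [exact absurd (h'.trans h).symm hd01; tauto; tauto]
    rcases this with h' | h'
    · exact key01 (Or.inl (by rw [← h, h']))
    · exact key01 (Or.inr (by rw [← h, h']))
  · -- a = x1 : x0 = b or c, pair {x0,x1} = {b,a} etc
    have : x0 = b ∨ x0 = c := by rcases m0 with h' | h' | h' <;> [exact absurd (h'.trans h) hd01; tauto; tauto]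
    rcases this with h' | h'
    · exact key01 (Or.inl (by rw [← h, h']; exact Multiset.cons_swap b a 0))
    · exact key01 (Or.inr (by rw [← h, h']; exact Multiset.cons_swap c a 0))
  · -- a = x2 : x1 = b or c, pair {x1,x2} = {b,a} etc
    have : x1 = b ∨ x1 = c := by rcases m1 with h' | h' | h' <;> [exact absurd (h'.trans h) hd12; tauto; tauto]
    rcases this with h' | h'
    · exact key12 (Or.inl (by rw [← h, h']; exact Multiset.cons_swap b a 0))
    · exact key12 (Or.inr (by rw [← h, h']; exact Multiset.cons_swap c a 0))
end

section
/- If X is a universal cycle on 2-subsets of [n] and X' is obtained from X by repeating the first occurrence of each letter (i.e., replacing that character a by aa), then X' is a universal cycle on 2-multisets of [n]. -/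
/-- Duplicate the first occurrence of each letter in a list (first argument is the
set of letters already seen). -/
def dupFirsts : List ℕ → List ℕ → List ℕ
  | _, [] => []
  | seen, a :: l =>
      if a ∈ seen then a :: dupFirsts seen l
      else a :: a :: dupFirsts (a :: seen) l

/-!
Write `X' = dupFirsts [] X`. Reading `X` as the linear string `X ++ [head X]`, doubling a letter `a`
inserts the window `{a, a}` and leaves every other window in place, so the cyclic 2-windows of `X'`
are, up to order, those of `X` together with one diagonal window `{a, a}` for each letter `a` of `X`.
The windows of `X` are the 2-subsets of `[n]`, each once. Every `x ∈ [n]` is a letter of `X`: any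
window of `X` shows `n ≥ 2`, so `x` lies in some 2-subset `{x, y}`, which is a window of `X`.
Therefore the windows of `X'` are the 2-multisets of `[n]`, each once.
-/

variable {α : Type*}

/-- The 2-windows of the linear string `l ++ [c]`. -/
def pairWindows : List α → α → List (Multiset α)
  | [], _ => []
  | a :: l, c => {a, l.headD c} :: pairWindows l c

lemma pairWindows_eq_map_range (u : List ℕ) (c : ℕ) :
    pairWindows u c = (List.range u.length).map
      (fun i => ({u.getD i 0, (u ++ [c]).getD (i + 1) 0} : Multiset ℕ)) := by
  induction u with
  | nil => rfl
  | cons a l ih =>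
    rw [pairWindows, List.length_cons, List.range_succ_eq_map, List.map_cons, List.map_map, ih]
    cases l <;> rfl

lemma cycWindow_two {u : List ℕ} {i : ℕ} (hi : i < u.length) :
    cycWindow u 2 i = ({u.getD i 0, u.getD ((i + 1) % u.length) 0} : Multiset ℕ) := by
  simp [cycWindow, List.range_succ, Nat.mod_eq_of_lt hi]
  rfl

lemma cycWindows_two_eq_pairWindows {u : List ℕ} (hu : u ≠ []) :
    cycWindows u 2 = pairWindows u (u.headD 0) := by
  rw [pairWindows_eq_map_range, cycWindows]
  refine List.map_congr_left fun i hi => ?_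
  rw [List.mem_range] at hi
  rw [cycWindow_two hi]
  rcases Nat.lt_or_ge (i + 1) u.length with h | h
  · rw [Nat.mod_eq_of_lt h, List.getD_append _ _ _ _ h]
  · rw [show i + 1 = u.length by omega, Nat.mod_self, List.getD_append_right _ _ _ _ le_rfl]
    cases u with
    | nil => exact absurd rfl hu
    | cons a l => simp

lemma mem_dupFirsts {seen l : List ℕ} {x : ℕ} : x ∈ dupFirsts seen l ↔ x ∈ l := by
  induction l generalizing seen with
  | nil => rfl
  | cons a l ih =>
    rw [dupFirsts]
    split <;> simp [ih]

lemma headD_dupFirsts (seen l : List ℕ) (c : ℕ) : (dupFirsts seen l).headD c = l.headD c := by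
  cases l with
  | nil => rfl
  | cons a l => rw [dupFirsts]; split <;> rfl

section newLetters

variable [DecidableEq α]

def newLetters : List α → List α → List α
  | _, [] => []
  | seen, a :: l => if a ∈ seen then newLetters seen l else a :: newLetters (a :: seen) l

lemma mem_newLetters {seen l : List α} {x : α} :
    x ∈ newLetters seen l ↔ x ∈ l ∧ x ∉ seen := by
  induction l generalizing seen with
  | nil => simp [newLetters]
  | cons a l ih =>
    rw [newLetters]
    split <;> simp only [ih, List.mem_cons] <;> grind

lemma nodup_newLetters (seen l : List α) : (newLetters seen l).Nodup := by
  induction l generalizing seen with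
  | nil => exact List.nodup_nil
  | cons a l ih =>
    rw [newLetters]
    split
    · exact ih seen
    · exact (ih _).cons fun h => (mem_newLetters.1 h).2 List.mem_cons_self

end newLetters

lemma pair_self_injective : Function.Injective fun x : α => ({x, x} : Multiset α) :=
  fun a b h => by simpa using congrArg (a ∈ ·) h

lemma pairWindows_dupFirsts_perm (seen l : List ℕ) (c : ℕ) :
    (pairWindows (dupFirsts seen l) c).Perm
      ((newLetters seen l).map (fun x => ({x, x} : Multiset ℕ)) ++ pairWindows l c) := by
  induction l generalizing seen with
  | nil => rfl
  | cons a l ih =>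
    rw [dupFirsts, newLetters]
    split
    · rw [pairWindows, pairWindows, headD_dupFirsts]
      exact ((ih seen).cons _).trans List.perm_middle.symm
    · rw [pairWindows, pairWindows, pairWindows, headD_dupFirsts]
      exact (((ih _).cons _).trans List.perm_middle.symm).cons _

lemma dupFirsts_ne_nil {seen w : List ℕ} (hw : w ≠ []) : dupFirsts seen w ≠ [] := by
  obtain ⟨a, ha⟩ := List.exists_mem_of_ne_nil w hw
  exact List.ne_nil_of_mem (mem_dupFirsts.2 ha)

lemma cycWindows_dupFirsts_perm {w : List ℕ} (hw : w ≠ []) :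
    (cycWindows (dupFirsts [] w) 2).Perm
      ((newLetters [] w).map (fun x => ({x, x} : Multiset ℕ)) ++ cycWindows w 2) := by
  rw [cycWindows_two_eq_pairWindows (dupFirsts_ne_nil hw), cycWindows_two_eq_pairWindows hw,
    headD_dupFirsts]
  exact pairWindows_dupFirsts_perm [] w _

lemma mem_of_mem_cycWindows {w : List ℕ} (hw : w ≠ []) {t : ℕ} {m : Multiset ℕ}
    (hm : m ∈ cycWindows w t) {x : ℕ} (hx : x ∈ m) : x ∈ w := by
  obtain ⟨i, -, rfl⟩ := List.mem_map.1 hm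
  obtain ⟨j, -, rfl⟩ := List.mem_map.1 (Multiset.mem_coe.1 hx)
  have hlt : (i + j) % w.length < w.length := Nat.mod_lt _ (List.length_pos_iff.2 hw)
  rw [List.getD_eq_getElem _ _ hlt]
  exact List.getElem_mem _

lemma IsUcycleSet.mem_of_mem_Icc {n : ℕ} {w : List ℕ} (hw : IsUcycleSet n 2 w) {x : ℕ}
    (hx : x ∈ Finset.Icc 1 n) : x ∈ w := by
  obtain ⟨hne, -, -, hiff⟩ := hw
  have hwin : cycWindow w 2 0 ∈ cycWindows w 2 :=
    List.mem_map_of_mem (List.mem_range.2 (List.length_pos_iff.2 hne))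
  obtain ⟨hnd, hcard, hIcc⟩ := (hiff _).1 hwin
  obtain ⟨a, b, hab⟩ := Multiset.card_eq_two.1 hcard
  rw [hab] at hnd hIcc
  obtain ⟨y, hy, hxy⟩ : ∃ y ∈ Finset.Icc 1 n, x ≠ y := by
    by_cases hxa : x = a
    · exact ⟨b, hIcc b (by simp), by simpa [hxa] using hnd⟩
    · exact ⟨a, hIcc a (by simp), hxa⟩
  have hxy_win : ({x, y} : Multiset ℕ) ∈ cycWindows w 2 := by
    refine (hiff _).2 ⟨by simpa using hxy, rfl, fun z hz => ?_⟩
    obtain rfl | rfl : z = x ∨ z = y := by simpa using hz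
    exacts [hx, hy]
  exact mem_of_mem_cycWindows hne hxy_win (Multiset.mem_cons_self _ _)

theorem dupFirsts_ucycle (n : ℕ) (w : List ℕ) (hw : IsUcycleSet n 2 w) :
    IsUcycle n 2 (dupFirsts [] w) := by
  have hocc : ∀ x ∈ Finset.Icc 1 n, x ∈ w := fun x hx => hw.mem_of_mem_Icc hx
  obtain ⟨hne, hletters, hnd, hiff⟩ := hw
  have hperm := cycWindows_dupFirsts_perm hne
  refine ⟨dupFirsts_ne_nil hne, fun x hx => hletters x (mem_dupFirsts.1 hx), ?_, fun m => ?_⟩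
  · rw [hperm.nodup_iff, List.nodup_append]
    refine ⟨(nodup_newLetters [] w).map pair_self_injective, hnd, ?_⟩
    rintro _ hdiag m hm rfl
    obtain ⟨x, -, rfl⟩ := List.mem_map.1 hdiag
    simpa using ((hiff _).1 hm).1
  · rw [hperm.mem_iff, List.mem_append, List.mem_map, hiff]
    simp only [mem_newLetters, List.not_mem_nil, not_false_eq_true, and_true]
    constructor
    · rintro (⟨x, hx, rfl⟩ | ⟨-, hm⟩)
      · exact ⟨rfl, by simpa using hletters x hx⟩
      · exact hm
    · rintro ⟨hcard, hIcc⟩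
      obtain ⟨x, y, rfl⟩ := Multiset.card_eq_two.1 hcard
      rcases eq_or_ne x y with rfl | hxy
      · exact .inl ⟨x, hocc x (hIcc x (by simp)), rfl⟩
      · exact .inr ⟨by simpa using hxy, rfl, hIcc⟩
end

section
/- The linear string U = aaffc aeebb decec bddcc fbada dfbf over the six-letter alphabet {a,b,c,d,e,f} contains among its consecutive 3-windows each 3-multiset in C \ {{a,b,e}, {a,d,e}, {a,c,d}, {c,d,f}} exactly once, where C is the collection of all 3-multisets over {a,b,c,d,e,f} having at least one element from {a,b,c} and at least one element from {d,e,f}. -/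
/-- Auxiliary injection sending `1,…,6` to the six letters. -/
def phi (a b c d e f n : ℕ) : ℕ :=
  if n = 1 then a else if n = 2 then b else if n = 3 then c
  else if n = 4 then d else if n = 5 then e else if n = 6 then f
  else a + b + c + d + e + f + n

/-- The numeric version of the string `U`. -/
def stringU6 : List ℕ := [1, 1, 6, 6, 3, 1, 5, 5, 2, 2, 4, 5, 3, 5, 3, 2, 4, 4, 3, 3,
    6, 2, 1, 4, 1, 4, 6, 2, 6]

lemma linWindows_map (l : List ℕ) (g : ℕ → ℕ) (t : ℕ) :
    linWindows (l.map g) t = (linWindows l t).map (Multiset.map g) := by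
  unfold linWindows
  rw [List.length_map, List.map_map]
  apply List.map_congr_left
  intro i hi
  simp only [List.mem_range] at hi
  simp only [Function.comp]
  rw [Multiset.map_coe, List.map_map]
  congr 1
  apply List.map_congr_left
  intro j hj
  simp only [List.mem_range] at hj
  have hlt : i + j < l.length := by omega
  simp [Function.comp, List.getD_eq_getElem?_getD, List.getElem?_map, hlt,
    List.getElem?_eq_getElem]

set_option maxHeartbeats 1000000 in
lemma phi_inj (a b c d e f : ℕ) (hdist : [a, b, c, d, e, f].Nodup) :
    Function.Injective (phi a b c d e f) := by
  simp only [List.nodup_cons, List.mem_cons, List.mem_singleton, List.not_mem_nil,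
    or_false, not_or, List.nodup_nil, and_true] at hdist
  obtain ⟨⟨hab, hac, had, hae, haf⟩, ⟨hbc, hbd, hbe, hbf⟩, ⟨hcd, hce, hcf⟩, ⟨hde, hdf⟩, hef⟩ :=
    hdist
  intro x y h
  unfold phi at h
  split_ifs at h <;> omega

theorem stringU_windows (a b c d e f : ℕ)
    (hdist : [a, b, c, d, e, f].Nodup) :
    (linWindows [a, a, f, f, c, a, e, e, b, b, d, e, c, e, c, b, d, d, c, c,
        f, b, a, d, a, d, f, b, f] 3).Nodup ∧
    ∀ m ∈ linWindows [a, a, f, f, c, a, e, e, b, b, d, e, c, e, c, b, d, d, c, c,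
        f, b, a, d, a, d, f, b, f] 3,
      (Multiset.card m = 3 ∧ (∀ x ∈ m, x = a ∨ x = b ∨ x = c ∨ x = d ∨ x = e ∨ x = f) ∧
        (∃ x ∈ m, x = a ∨ x = b ∨ x = c) ∧ (∃ x ∈ m, x = d ∨ x = e ∨ x = f)) ∧
      m ≠ {a, b, e} ∧ m ≠ {a, d, e} ∧ m ≠ {a, c, d} ∧ m ≠ {c, d, f} := by
  set φ := phi a b c d e f with hφ
  have hinj : Function.Injective φ := phi_inj a b c d e f hdist
  have hlist : [a, a, f, f, c, a, e, e, b, b, d, e, c, e, c, b, d, d, c, c,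
      f, b, a, d, a, d, f, b, f] = stringU6.map φ := by
    simp [stringU6, hφ, phi]
  rw [hlist, linWindows_map]
  have hnodup : (linWindows stringU6 3).Nodup := by decide
  have hcard : ∀ M ∈ linWindows stringU6 3, Multiset.card M = 3 := by decide
  have hmem : ∀ M ∈ linWindows stringU6 3, ∀ x ∈ M, 1 ≤ x ∧ x ≤ 6 := by decide
  have hex1 : ∀ M ∈ linWindows stringU6 3, ∃ x ∈ M, x ≤ 3 := by
    have h : ∀ M ∈ linWindows stringU6 3, ¬ ∀ x ∈ M, ¬ x ≤ 3 := by decide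
    intro M hM
    have := h M hM
    push_neg at this
    exact this
  have hex2 : ∀ M ∈ linWindows stringU6 3, ∃ x ∈ M, 4 ≤ x := by
    have h : ∀ M ∈ linWindows stringU6 3, ¬ ∀ x ∈ M, ¬ 4 ≤ x := by decide
    intro M hM
    have := h M hM
    push_neg at this
    exact this
  have hne : ∀ M ∈ linWindows stringU6 3,
      M ≠ {1,2,5} ∧ M ≠ {1,4,5} ∧ M ≠ {1,3,4} ∧ M ≠ {3,4,6} := by decide
  constructor
  · exact (hnodup).map (Multiset.map_injective hinj)
  · intro m hm
    rw [List.mem_map] at hm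
    obtain ⟨M, hM, rfl⟩ := hm
    refine ⟨⟨?_, ?_, ?_, ?_⟩, ?_, ?_, ?_, ?_⟩
    · rw [Multiset.card_map]; exact hcard M hM
    · intro x hx
      rw [Multiset.mem_map] at hx
      obtain ⟨y, hy, rfl⟩ := hx
      obtain ⟨hb1, hb2⟩ := hmem M hM y hy
      interval_cases y <;> simp [hφ, phi]
    · obtain ⟨y, hy, hy3⟩ := hex1 M hM
      refine ⟨φ y, Multiset.mem_map_of_mem _ hy, ?_⟩
      obtain ⟨hb1, hb2⟩ := hmem M hM y hy
      interval_cases y <;> simp [hφ, phi]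
    · obtain ⟨y, hy, hy4⟩ := hex2 M hM
      refine ⟨φ y, Multiset.mem_map_of_mem _ hy, ?_⟩
      obtain ⟨hb1, hb2⟩ := hmem M hM y hy
      interval_cases y <;> simp [hφ, phi]
    · intro h
      have e1 : ({a, b, e} : Multiset ℕ) = Multiset.map φ {1, 2, 5} := by
        simp [hφ, phi]
      exact (hne M hM).1 (Multiset.map_injective hinj (h.trans e1))
    · intro h
      have e1 : ({a, d, e} : Multiset ℕ) = Multiset.map φ {1, 4, 5} := by
        simp [hφ, phi]
      exact (hne M hM).2.1 (Multiset.map_injective hinj (h.trans e1))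
    · intro h
      have e1 : ({a, c, d} : Multiset ℕ) = Multiset.map φ {1, 3, 4} := by
        simp [hφ, phi]
      exact (hne M hM).2.2.1 (Multiset.map_injective hinj (h.trans e1))
    · intro h
      have e1 : ({c, d, f} : Multiset ℕ) = Multiset.map φ {3, 4, 6} := by
        simp [hφ, phi]
      exact (hne M hM).2.2.2 (Multiset.map_injective hinj (h.trans e1))
end

section
/- Appending the string x_1 x_1 x_1 x_2 x_2 x_2 ... x_n x_n x_n to a cyclic string whose first character is x_1 and last character is x_n contributes exactly the following new cyclic 3-windows: {x_i, x_i, x_i} for each i, and {x_i, x_i, x_{i+1}} and {x_i, x_{i+1}, x_{i+1}} for each i (indices mod n, so including the pairs involving x_n and x_1). -/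
/-!
For a word `w` of length at least two, the cyclic 3-windows of `w` are the linear 3-windows of
`w ++ w.take 2`, and the linear 3-windows of a word cut at an overlap of two letters are those of
the two pieces. Cutting `Y ++ B ++ [y₁, y₂]` at the two junctions, which both read `yₘ y₁` when
`B` starts with `y₁` and ends with `yₘ`, shows that appending `B` adds exactly the cyclic windows
of `B`. For `B = x₁x₁x₁ ⋯ xₙxₙxₙ` these are the three windows `xᵢxᵢxᵢ, xᵢxᵢxᵢ₊₁, xᵢxᵢ₊₁xᵢ₊₁`
of each cyclic step `xᵢ → xᵢ₊₁`.
-/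

namespace List

variable {α : Type*}

def windows3 : List α → List (Multiset α)
  | a :: b :: c :: l => {a, b, c} :: windows3 (b :: c :: l)
  | _ => []

theorem windows3_append_cons_cons (s r : List α) (p q : α) :
    windows3 (s ++ p :: q :: r) = windows3 (s ++ [p, q]) ++ windows3 (p :: q :: r) := by
  induction s with
  | nil => simp [windows3]
  | cons x s ih =>
    rcases s with _ | ⟨y, _ | ⟨z, s⟩⟩ <;> simp_all [windows3]

theorem windows3_eq_map_range (l : List α) (d : α) :
    windows3 l = (range (l.length - 2)).map
      (fun i => {l.getD i d, l.getD (i + 1) d, l.getD (i + 2) d}) := by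
  induction l using windows3.induct with
  | case1 a b c l ih =>
    have hlen : (a :: b :: c :: l).length - 2 = (b :: c :: l).length - 2 + 1 := by simp
    rw [windows3, ih, hlen, range_succ_eq_map]
    simp [Function.comp_def]
  | case2 l h =>
    rcases l with _ | ⟨a, _ | ⟨b, _ | ⟨c, l⟩⟩⟩
    · rfl
    · rfl
    · rfl
    · exact (h a b c l rfl).elim

def stepWindows (x y : α) : List (Multiset α) := [{x, x, x}, {x, x, y}, {x, y, y}]

theorem windows3_flatMap_triple_append (xs : List α) (c : α) :
    windows3 (xs.flatMap (fun a => [a, a, a]) ++ [c, c]) =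
      (xs.zip (xs.tail ++ [c])).flatMap fun p => stepWindows p.1 p.2 := by
  induction xs with
  | nil => rfl
  | cons x t ih =>
    cases t with
    | nil => rfl
    | cons y t => simp_all [windows3, stepWindows]

theorem map_range_getD_eq_zip_rotate (xs : List α) (d : α) :
    (range xs.length).map (fun i => (xs.getD i d, xs.getD ((i + 1) % xs.length) d)) =
      xs.zip (xs.rotate 1) := by
  refine ext_getElem (by simp) fun i h₁ h₂ => ?_
  simp at h₁
  simp [getElem_rotate, getD_eq_getElem?_getD, h₁, Nat.mod_lt _ (Nat.zero_lt_of_lt h₁)]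

theorem headI_flatMap_triple [Inhabited α] (xs : List α) :
    (xs.flatMap fun a => [a, a, a]).headI = xs.headI := by
  cases xs <;> rfl

theorem getLastD_flatMap_triple (xs : List α) (d : α) :
    (xs.flatMap fun a => [a, a, a]).getLastD d = xs.getLastD d := by
  induction xs using reverseRecOn <;> simp

theorem exists_eq_cons_append_getLastD [Inhabited α] {l : List α} (h : 2 ≤ l.length) (d : α) :
    ∃ u, l = l.headI :: u ++ [l.getLastD d] := by
  rcases l with _ | ⟨x, t⟩
  · simp at h
  have ht : t ≠ [] := by rintro rfl; simp at h
  exact ⟨t.dropLast, by simp [getLastD_eq_getLast?, getLast?_cons, getLast?_eq_some_getLast ht,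
    dropLast_append_getLast ht]⟩

end List

open List

theorem cycWindows_three_eq_windows3 (w : List ℕ) (hw : 2 ≤ w.length) :
    cycWindows w 3 = (w ++ w.take 2).windows3 := by
  have hget : ∀ j < w.length + 2, (w ++ w.take 2).getD j 0 = w.getD (j % w.length) 0 := by
    intro j hj
    rcases lt_or_ge j w.length with h | h
    · rw [getD_append _ _ _ _ h, Nat.mod_eq_of_lt h]
    · rw [getD_append_right _ _ _ _ h, Nat.mod_eq_sub_mod h, Nat.mod_eq_of_lt (by omega)]
      simp [getD_eq_getElem?_getD, show j - w.length < 2 by omega]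
  rw [cycWindows, windows3_eq_map_range _ 0, length_append, length_take, min_eq_left hw,
    Nat.add_sub_cancel]
  refine map_congr_left fun i hi => ?_
  rw [mem_range] at hi
  rw [hget i (by omega), hget (i + 1) (by omega), hget (i + 2) (by omega)]
  rfl

theorem cycWindows_three_splice (a z : ℕ) (u v : List ℕ) :
    (cycWindows (a :: u ++ [z] ++ (a :: v ++ [z])) 3 : Multiset (Multiset ℕ)) =
      cycWindows (a :: u ++ [z]) 3 + cycWindows (a :: v ++ [z]) 3 := by
  obtain ⟨c, u', hu⟩ : ∃ c u', u ++ [z] = c :: u' := by cases u <;> exact ⟨_, _, rfl⟩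
  obtain ⟨d, v', hv⟩ : ∃ d v', v ++ [z] = d :: v' := by cases v <;> exact ⟨_, _, rfl⟩
  have htakeY : (a :: u ++ [z] ++ (a :: v ++ [z])).take 2 = [a, c] := by simp [hu]
  have htakeY' : (a :: u ++ [z]).take 2 = [a, c] := by simp [hu]
  have htakeB : (a :: v ++ [z]).take 2 = [a, d] := by simp [hv]
  have hva : v ++ [z, a] = d :: (v' ++ [a]) := by rw [← cons_append, ← hv]; simp
  -- Cut at the junctions `z a` behind `Y` and behind `B`, and at `a d` to rotate `B`'s windows.
  have hYB : windows3 (a :: u ++ [z] ++ (a :: v ++ [z]) ++ [a, c]) =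
      windows3 (a :: u ++ [z, a]) ++
        ((windows3 [z, a, d] ++ windows3 (a :: v ++ [z, a])) ++ windows3 [z, a, c]) := by
    rw [show a :: u ++ [z] ++ (a :: v ++ [z]) ++ [a, c] = a :: u ++ z :: a :: (v ++ [z, a, c])
        by simp, windows3_append_cons_cons,
      show z :: a :: (v ++ [z, a, c]) = z :: a :: v ++ z :: a :: [c] by simp,
      windows3_append_cons_cons (z :: a :: v),
      show z :: a :: v ++ [z, a] = [z] ++ a :: d :: (v' ++ [a]) by simp [hva],
      windows3_append_cons_cons [z], show a :: d :: (v' ++ [a]) = a :: v ++ [z, a] by simp [hva]]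
    rfl
  have hY : windows3 (a :: u ++ [z] ++ [a, c]) =
      windows3 (a :: u ++ [z, a]) ++ windows3 [z, a, c] := by
    rw [show a :: u ++ [z] ++ [a, c] = a :: u ++ z :: a :: [c] by simp, windows3_append_cons_cons]
  have hB : windows3 (a :: v ++ [z] ++ [a, d]) =
      windows3 (a :: v ++ [z, a]) ++ windows3 [z, a, d] := by
    rw [show a :: v ++ [z] ++ [a, d] = a :: v ++ z :: a :: [d] by simp, windows3_append_cons_cons]
  rw [cycWindows_three_eq_windows3 _ (by simp; omega), cycWindows_three_eq_windows3 _ (by simp),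
    cycWindows_three_eq_windows3 _ (by simp), htakeY, htakeY', htakeB, hYB, hY, hB]
  simp only [← Multiset.coe_add]
  abel

theorem cycWindows_flatMap_triple (xs : List ℕ) (h : xs ≠ []) :
    cycWindows (xs.flatMap fun a => [a, a, a]) 3 =
      (xs.zip (xs.rotate 1)).flatMap fun p => stepWindows p.1 p.2 := by
  obtain ⟨x, t, rfl⟩ := exists_cons_of_ne_nil h
  rw [cycWindows_three_eq_windows3 _ (by simp),
    show ((x :: t).flatMap fun a => [a, a, a]).take 2 = [x, x] from rfl,
    windows3_flatMap_triple_append]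
  simp

theorem append_block_windows_general (n : ℕ) (xs Y : List ℕ)
    (hxslen : xs.length = n) (hxsne : xs ≠ [])
    (hYlen : 3 ≤ Y.length)
    (hfirst : Y.headI = xs.headI) (hlast : Y.getLastD 0 = xs.getLastD 0) :
    (cycWindows (Y ++ xs.flatMap (fun a => [a, a, a])) 3 : Multiset (Multiset ℕ)) =
      (cycWindows Y 3 : Multiset (Multiset ℕ)) +
      ((List.range n).flatMap (fun i =>
        [({xs.getD i 0, xs.getD i 0, xs.getD i 0} : Multiset ℕ),
         ({xs.getD i 0, xs.getD i 0, xs.getD ((i + 1) % n) 0} : Multiset ℕ),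
         ({xs.getD i 0, xs.getD ((i + 1) % n) 0, xs.getD ((i + 1) % n) 0} : Multiset ℕ)])
        : Multiset (Multiset ℕ)) := by
  set B := xs.flatMap fun a => [a, a, a]
  have hB : 2 ≤ B.length := by
    have := length_pos_iff.mpr hxsne
    simp [B]; omega
  obtain ⟨u, hu⟩ := exists_eq_cons_append_getLastD (by omega : 2 ≤ Y.length) 0
  obtain ⟨v, hv⟩ := exists_eq_cons_append_getLastD hB 0
  rw [headI_flatMap_triple, getLastD_flatMap_triple, ← hfirst, ← hlast] at hv
  have hsplice := cycWindows_three_splice Y.headI (Y.getLastD 0) u v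
  rw [← hu, ← hv] at hsplice
  rw [hsplice, cycWindows_flatMap_triple xs hxsne, ← map_range_getD_eq_zip_rotate xs 0,
    flatMap_map, hxslen]
  rfl

theorem append_block_windows (n : ℕ) (xs Y : List ℕ)
    (hxslen : xs.length = n) (hxs : xs.Nodup) (hxsne : xs ≠ [])
    (hxsmem : ∀ x ∈ xs, x ∈ Finset.Icc 1 n)
    (hYlen : 3 ≤ Y.length)
    (hfirst : Y.headI = xs.headI) (hlast : Y.getLastD 0 = xs.getLastD 0) :
    (cycWindows (Y ++ xs.flatMap (fun a => [a, a, a])) 3 : Multiset (Multiset ℕ)) =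
      (cycWindows Y 3 : Multiset (Multiset ℕ)) +
      ((List.range n).flatMap (fun i =>
        [({xs.getD i 0, xs.getD i 0, xs.getD i 0} : Multiset ℕ),
         ({xs.getD i 0, xs.getD i 0, xs.getD ((i + 1) % n) 0} : Multiset ℕ),
         ({xs.getD i 0, xs.getD ((i + 1) % n) 0, xs.getD ((i + 1) % n) 0} : Multiset ℕ)])
        : Multiset (Multiset ℕ)) :=
  append_block_windows_general n xs Y hxslen hxsne hYlen hfirst hlast
end
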